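/- Suppose a binary relation R on W satisfies ∀w,u,v (wRⁿu ∧ wRᵏv → uRv) and fix the grammar G = {◇ ⟶ ◆ⁿ◇ᵏ, ◆ ⟶ ◆ᵏ◇ⁿ}. If in the propagation graph of R (edges (w,◇,u) and (u,◆,w) for each pair with wRu) there is a propagation path from x to z whose string lies in L_G(◆), then zRx. -/
import Mathlib


inductive Ch : Type where
  | dia : Ch
  | bdia : Ch
deriving DecidableEq

def Ch.conv : Ch → Ch
  | .dia => .bdia
  | .bdia => .dia

def strConv (s : List Ch) : List Ch := (s.map Ch.conv).reverse

abbrev GRule := Ch × List Ch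

def Step (G : Set GRule) (s t : List Ch) : Prop :=
  ∃ s' t' c r, (c, r) ∈ G ∧ s = s' ++ [c] ++ t' ∧ t = s' ++ r ++ t'

def Derives (G : Set GRule) : List Ch → List Ch → Prop :=
  Relation.ReflTransGen (Step G)

def Lang (G : Set GRule) (s : List Ch) : Set (List Ch) := {t | Derives G s t}

def Edge {W : Type} (R : W → W → Prop) (w : W) (c : Ch) (u : W) : Prop :=
  match c with
  | .dia => R w u
  | .bdia => R u w

inductive PPath {W : Type} (R : W → W → Prop) : W → List Ch → W → Prop where
  | nil (w : W) : PPath R w [] w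
  | cons {w u z : W} {c : Ch} {s : List Ch} :
      Edge R w c u → PPath R u s z → PPath R w (c :: s) z

def Rpow {W : Type} (R : W → W → Prop) : ℕ → W → W → Prop
  | 0, w, u => w = u
  | n+1, w, u => ∃ v, R w v ∧ Rpow R n v u


lemma ppath_append_split {W : Type} {R : W → W → Prop} :
    ∀ {a b : List Ch} {x z : W}, PPath R x (a ++ b) z →
      ∃ y, PPath R x a y ∧ PPath R y b z := by
  intro a
  induction a with
  | nil => intro b x z h; exact ⟨x, PPath.nil x, h⟩
  | cons c a ih =>
    intro b x z h
    cases h with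
    | cons he hp =>
      obtain ⟨y, h1, h2⟩ := ih hp
      exact ⟨y, PPath.cons he h1, h2⟩

lemma ppath_append_of {W : Type} {R : W → W → Prop} :
    ∀ {a b : List Ch} {x y z : W}, PPath R x a y → PPath R y b z →
      PPath R x (a ++ b) z := by
  intro a
  induction a with
  | nil => intro b x y z h1 h2; cases h1; exact h2
  | cons c a ih =>
    intro b x y z h1 h2
    cases h1 with
    | cons he hp => exact PPath.cons he (ih hp h2)

lemma rpow_snoc {W : Type} {R : W → W → Prop} :
    ∀ {m : ℕ} {u v w : W}, Rpow R m u v → R v w → Rpow R (m+1) u w := by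
  intro m
  induction m with
  | zero => intro u v w h hr; cases h; exact ⟨w, hr, rfl⟩
  | succ m ih =>
    intro u v w h hr
    obtain ⟨a, ha, hp⟩ := h
    exact ⟨a, ha, ih hp hr⟩

lemma ppath_replicate_dia {W : Type} {R : W → W → Prop} :
    ∀ {m : ℕ} {w u : W}, PPath R w (List.replicate m Ch.dia) u → Rpow R m w u := by
  intro m
  induction m with
  | zero => intro w u h; cases h; rfl
  | succ m ih =>
    intro w u h
    rw [List.replicate_succ] at h
    cases h with
    | cons he hp => exact ⟨_, he, ih hp⟩

lemma ppath_replicate_bdia {W : Type} {R : W → W → Prop} :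
    ∀ {m : ℕ} {w u : W}, PPath R w (List.replicate m Ch.bdia) u → Rpow R m u w := by
  intro m
  induction m with
  | zero => intro w u h; cases h; rfl
  | succ m ih =>
    intro w u h
    rw [List.replicate_succ] at h
    cases h with
    | cons he hp => exact rpow_snoc (ih hp) he

theorem propagation_bdia_sound {W : Type} (R : W → W → Prop) (n k : ℕ)
    (hframe : ∀ w u v : W, Rpow R n w u → Rpow R k w v → R u v)
    (G : Set GRule)
    (hG : G = {(Ch.dia, List.replicate n Ch.bdia ++ List.replicate k Ch.dia),
               (Ch.bdia, List.replicate k Ch.bdia ++ List.replicate n Ch.dia)})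
    (x z : W) (s : List Ch)
    (hpath : PPath R x s z) (hs : s ∈ Lang G [Ch.bdia]) :
    R z x := by
  subst hG
  have key : ∀ t : List Ch, Derives {(Ch.dia, List.replicate n Ch.bdia ++ List.replicate k Ch.dia),
        (Ch.bdia, List.replicate k Ch.bdia ++ List.replicate n Ch.dia)} [Ch.bdia] t →
      ∀ x z : W, PPath R x t z → R z x := by
    intro t ht
    induction ht with
    | refl =>
      intro x z h
      cases h with
      | cons he hp => cases hp; exact he
    | tail _ hstep ih =>
      intro x z h
      obtain ⟨s', t', c, r, hmem, hb, htt⟩ := hstep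
      subst hb htt
      obtain ⟨u, hu1, hu2⟩ := ppath_append_split h
      obtain ⟨w, hw1, hw2⟩ := ppath_append_split hu1
      have hedge : Edge R w c u := by
        simp only [Set.mem_insert_iff, Set.mem_singleton_iff, Prod.mk.injEq] at hmem
        rcases hmem with ⟨hc, hr⟩ | ⟨hc, hr⟩
        · subst hc hr
          obtain ⟨v, hv1, hv2⟩ := ppath_append_split hw2
          exact hframe v w u (ppath_replicate_bdia hv1) (ppath_replicate_dia hv2)
        · subst hc hr
          obtain ⟨v, hv1, hv2⟩ := ppath_append_split hw2
          exact hframe v u w (ppath_replicate_dia hv2) (ppath_replicate_bdia hv1)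
      exact ih x z (ppath_append_of (ppath_append_of hw1 (PPath.cons hedge (PPath.nil u))) hu2)
  exact key s hs x z hpath
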